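/- Let n ≥ 1, p ∈ [1,∞) and α > 0. If f ∈ X^p is nonnegative with f = 0 a.e. on ℝ^n×(−∞,0), then J_α f is locally integrable on ℝ^n×(0,∞). -/

import Mathlib

open MeasureTheory Real Set
open scoped ENNReal

/-- The fractional heat kernel `Φ_α(x,t)`. -/
noncomputable def Phi (n : ℕ) (α : ℝ) (x : EuclideanSpace ℝ (Fin n)) (t : ℝ) : ℝ :=
  if 0 < t then
    (t ^ (α - 1) / Real.Gamma α) * (4 * Real.pi * t) ^ (-(n : ℝ) / 2) *
      Real.exp (-‖x‖ ^ 2 / (4 * t))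
  else 0

/-- `J_α f (x,t) = ∫_{-∞}^t ∫_{ℝ^n} Φ_α(x-ξ,t-τ) f(ξ,τ) dξ dτ`, as a value in `[0,∞]`. -/
noncomputable def J (n : ℕ) (α : ℝ) (f : EuclideanSpace ℝ (Fin n) → ℝ → ℝ)
    (x : EuclideanSpace ℝ (Fin n)) (t : ℝ) : ℝ≥0∞ :=
  ∫⁻ τ in Set.Iio t, ∫⁻ ξ, ENNReal.ofReal (Phi n α (x - ξ) (t - τ) * f ξ τ)

/-- Membership in `X^p`: measurable with finite `L^p` norm on `ℝ^n × (-∞,T)` for all `T`. -/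
def MemXp (n : ℕ) (p : ℝ≥0∞) (f : EuclideanSpace ℝ (Fin n) → ℝ → ℝ) : Prop :=
  Measurable (Function.uncurry f) ∧
  ∀ T : ℝ, eLpNorm (Function.uncurry f) p
    (volume.restrict {q : EuclideanSpace ℝ (Fin n) × ℝ | q.2 < T}) < ⊤

/-!
Write `k ≥ 0` for `Φ_α` on space-time and let `K ⊆ {t ≤ T}`. By Tonelli,
`∫_K J_α f ≤ ∫ g f⁺` with the adjoint potential `g(w) = ∫_K k(q - w) dq`. The spatial mass of
`k(·, s)` is `s^{α-1}/Γ(α)`, integrable near `s = 0` because `α > 0`; hence, with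
`C = ∫_0^T s^{α-1}/Γ(α) ds < ∞`, we get `g ≤ C` on `{w₂ ≥ 0}`, `g = 0` on `{w₂ ≥ T}` and
`∫_{w₂ ≥ 0} g ≤ C |K|`. Since `f = 0` for `t < 0`, only the slab `ℝⁿ × [0, T)` contributes, and
there `g f ≤ C f^p + g` (from `f ≤ f^p + 1`, `p ≥ 1`); both terms have finite integral since
`f ∈ X^p`.
-/

section

variable {n : ℕ} {α : ℝ}

lemma Phi_nonneg (hα : 0 < α) (x : EuclideanSpace ℝ (Fin n)) (t : ℝ) : 0 ≤ Phi n α x t := by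
  unfold Phi
  split_ifs with ht
  · have := Gamma_pos_of_pos hα
    have := rpow_nonneg ht.le (α - 1)
    have := rpow_nonneg (by positivity : 0 ≤ 4 * π * t) (-(n : ℝ) / 2)
    positivity
  · exact le_rfl

noncomputable def heatKernel (n : ℕ) (α : ℝ) (q : EuclideanSpace ℝ (Fin n) × ℝ) : ℝ≥0∞ :=
  ENNReal.ofReal (Phi n α q.1 q.2)

noncomputable def timeProfile (α : ℝ) : ℝ → ℝ≥0∞ :=
  (Ioi 0).indicator fun s => ENNReal.ofReal (s ^ (α - 1) / Gamma α)

lemma heatKernel_of_nonpos {q : EuclideanSpace ℝ (Fin n) × ℝ} (hq : q.2 ≤ 0) :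
    heatKernel n α q = 0 := by
  simp [heatKernel, Phi, not_lt.2 hq]

lemma measurable_heatKernel : Measurable (heatKernel n α) := by
  unfold heatKernel Phi
  exact (Measurable.ite (measurableSet_lt measurable_const measurable_snd) (by fun_prop)
    measurable_const).ennreal_ofReal

lemma lintegral_ofReal_exp_neg_mul_norm_sq {V : Type*} [NormedAddCommGroup V]
    [InnerProductSpace ℝ V] [FiniteDimensional ℝ V] [MeasurableSpace V] [BorelSpace V]
    {b : ℝ} (hb : 0 < b) :
    ∫⁻ v : V, ENNReal.ofReal (exp (-b * ‖v‖ ^ 2)) =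
      ENNReal.ofReal ((π / b) ^ (Module.finrank ℝ V / 2 : ℝ)) := by
  have hI := GaussianFourier.integral_rexp_neg_mul_sq_norm (V := V) hb
  have hint : Integrable fun v : V => exp (-b * ‖v‖ ^ 2) :=
    Integrable.of_integral_ne_zero (by rw [hI]; positivity)
  rw [← ofReal_integral_eq_lintegral_ofReal hint (ae_of_all _ fun v => (exp_pos _).le), hI]

lemma lintegral_heatKernel_eq_timeProfile (hα : 0 < α) (s : ℝ) :
    ∫⁻ x : EuclideanSpace ℝ (Fin n), heatKernel n α (x, s) = timeProfile α s := by
  by_cases hs : 0 < s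
  · have hc : 0 ≤ s ^ (α - 1) / Gamma α * (4 * π * s) ^ (-(n : ℝ) / 2) :=
      mul_nonneg (div_nonneg (rpow_nonneg hs.le _) (Gamma_pos_of_pos hα).le)
        (rpow_nonneg (by positivity) _)
    have hexp : ∀ x : EuclideanSpace ℝ (Fin n),
        -‖x‖ ^ 2 / (4 * s) = -(1 / (4 * s)) * ‖x‖ ^ 2 := fun x => by ring
    simp only [heatKernel, Phi, if_pos hs, hexp, ENNReal.ofReal_mul hc]
    rw [lintegral_const_mul' _ _ ENNReal.ofReal_ne_top,
      lintegral_ofReal_exp_neg_mul_norm_sq (by positivity), ← ENNReal.ofReal_mul hc,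
      timeProfile, indicator_of_mem (mem_Ioi.2 hs), finrank_euclideanSpace_fin,
      show π / (1 / (4 * s)) = 4 * π * s by field_simp, mul_assoc,
      ← rpow_add (by positivity), neg_div, neg_add_cancel, rpow_zero, mul_one]
  · simp [heatKernel, Phi, timeProfile, hs]

lemma setLIntegral_timeProfile_le {S : Set ℝ} {T : ℝ} (hS : S ∩ Ioi 0 ⊆ Ioc 0 T) :
    ∫⁻ s in S, timeProfile α s ≤ ∫⁻ s in Ioc 0 T, timeProfile α s := by
  simp only [timeProfile, setLIntegral_indicator measurableSet_Ioi]
  exact lintegral_mono_set fun s hs => ⟨hs.1, hS ⟨hs.2, hs.1⟩⟩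

lemma setLIntegral_timeProfile_Ioc_lt_top (hα : 0 < α) (T : ℝ) :
    ∫⁻ s in Ioc 0 T, timeProfile α s < ⊤ := by
  rw [timeProfile, setLIntegral_indicator measurableSet_Ioi,
    inter_eq_right.2 Ioc_subset_Ioi_self]
  exact IntegrableOn.setLIntegral_lt_top
    ((intervalIntegral.intervalIntegrable_rpow' (by linarith : -1 < α - 1)).1.div_const _)

lemma setLIntegral_heatKernel_preimage_snd (hα : 0 < α) (S : Set ℝ) :
    ∫⁻ v in Prod.snd ⁻¹' S, heatKernel n α v = ∫⁻ s in S, timeProfile α s := by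
  rw [← univ_prod, Measure.volume_eq_prod, ← Measure.prod_restrict, Measure.restrict_univ,
    lintegral_prod_symm' _ measurable_heatKernel]
  simp_rw [lintegral_heatKernel_eq_timeProfile hα]

lemma measurePreserving_sub_right_prod (w : EuclideanSpace ℝ (Fin n) × ℝ) :
    MeasurePreserving (· - w) volume volume := by
  rw [Measure.volume_eq_prod]
  exact measurePreserving_sub_right _ w

lemma measurePreserving_sub_left_prod (q : EuclideanSpace ℝ (Fin n) × ℝ) :
    MeasurePreserving (q - ·) volume volume := by
  rw [Measure.volume_eq_prod]
  exact (Measure.measurePreserving_sub_left _ q.1).prod (Measure.measurePreserving_sub_left _ q.2)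

lemma setLIntegral_heatKernel_sub_right_le (hα : 0 < α) {w : EuclideanSpace ℝ (Fin n) × ℝ}
    (hw : 0 ≤ w.2) (T : ℝ) :
    ∫⁻ q in Prod.snd ⁻¹' Iic T, heatKernel n α (q - w) ≤ ∫⁻ s in Ioc 0 T, timeProfile α s := by
  have hpre : (· - w) ⁻¹' (Prod.snd ⁻¹' Iic (T - w.2)) = Prod.snd ⁻¹' Iic T := by
    ext q; simp
  rw [← hpre, (measurePreserving_sub_right_prod w).setLIntegral_comp_preimage
    (measurable_snd measurableSet_Iic) measurable_heatKernel,
    setLIntegral_heatKernel_preimage_snd hα]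
  exact setLIntegral_timeProfile_le fun s hs => ⟨hs.2, by linarith [hs.1.out]⟩

lemma setLIntegral_heatKernel_sub_left_le (hα : 0 < α) {q : EuclideanSpace ℝ (Fin n) × ℝ}
    {T : ℝ} (hq : q.2 ≤ T) :
    ∫⁻ w in Prod.snd ⁻¹' Ici 0, heatKernel n α (q - w) ≤ ∫⁻ s in Ioc 0 T, timeProfile α s := by
  have hpre : (q - ·) ⁻¹' (Prod.snd ⁻¹' Iic q.2) = Prod.snd ⁻¹' Ici 0 := by
    ext w; simp
  rw [← hpre, (measurePreserving_sub_left_prod q).setLIntegral_comp_preimage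
    (measurable_snd measurableSet_Iic) measurable_heatKernel,
    setLIntegral_heatKernel_preimage_snd hα]
  exact setLIntegral_timeProfile_le fun s hs => ⟨hs.2, hs.1.out.trans hq⟩

noncomputable def adjointPotential (n : ℕ) (α : ℝ) (K : Set (EuclideanSpace ℝ (Fin n) × ℝ))
    (w : EuclideanSpace ℝ (Fin n) × ℝ) : ℝ≥0∞ :=
  ∫⁻ q in K, heatKernel n α (q - w)

section adjointPotential

variable {K : Set (EuclideanSpace ℝ (Fin n) × ℝ)} {T : ℝ}

lemma measurable_adjointPotential :
    Measurable (adjointPotential n α K) :=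
  (measurable_heatKernel.comp (measurable_snd.sub measurable_fst)).lintegral_prod_right'

lemma adjointPotential_le (hα : 0 < α) (hKT : K ⊆ Prod.snd ⁻¹' Iic T)
    {w : EuclideanSpace ℝ (Fin n) × ℝ} (hw : 0 ≤ w.2) :
    adjointPotential n α K w ≤ ∫⁻ s in Ioc 0 T, timeProfile α s :=
  (lintegral_mono_set hKT).trans (setLIntegral_heatKernel_sub_right_le hα hw T)

lemma adjointPotential_eq_zero (hK : MeasurableSet K) (hKT : K ⊆ Prod.snd ⁻¹' Iic T)
    {w : EuclideanSpace ℝ (Fin n) × ℝ} (hw : T ≤ w.2) :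
    adjointPotential n α K w = 0 :=
  (setLIntegral_congr_fun hK fun _ hq =>
    heatKernel_of_nonpos (sub_nonpos.2 ((hKT hq).out.trans hw))).trans lintegral_zero

lemma setLIntegral_adjointPotential_le (hα : 0 < α) (hKT : K ⊆ Prod.snd ⁻¹' Iic T) :
    ∫⁻ w in Prod.snd ⁻¹' Ici 0, adjointPotential n α K w ≤
      (∫⁻ s in Ioc 0 T, timeProfile α s) * volume K := by
  unfold adjointPotential
  rw [lintegral_lintegral_swap (f := fun w q => heatKernel n α (q - w))
    (measurable_heatKernel.comp (measurable_snd.sub measurable_fst)).aemeasurable]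
  calc _ ≤ ∫⁻ _ in K, ∫⁻ s in Ioc 0 T, timeProfile α s :=
        setLIntegral_mono measurable_const fun q hq =>
          setLIntegral_heatKernel_sub_left_le hα (hKT hq)
    _ = _ := setLIntegral_const _ _

lemma adjointPotential_mul_ae_eq_indicator (hK : MeasurableSet K) (hKT : K ⊆ Prod.snd ⁻¹' Iic T)
    {f : EuclideanSpace ℝ (Fin n) → ℝ → ℝ}
    (hzero : ∀ᵐ q : EuclideanSpace ℝ (Fin n) × ℝ, q.2 < 0 → f q.1 q.2 = 0) :
    (fun w => adjointPotential n α K w * ENNReal.ofReal (f w.1 w.2)) =ᵐ[volume]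
      (Prod.snd ⁻¹' Ico 0 T).indicator
        fun w => adjointPotential n α K w * ENNReal.ofReal (f w.1 w.2) := by
  filter_upwards [hzero] with w hw
  by_cases hwA : w ∈ Prod.snd ⁻¹' Ico 0 T
  · rw [indicator_of_mem hwA]
  rw [indicator_of_notMem hwA]
  rcases lt_or_ge w.2 0 with hneg | hnonneg
  · rw [hw hneg, ENNReal.ofReal_zero, mul_zero]
  · rw [adjointPotential_eq_zero hK hKT (not_lt.1 fun hlt => hwA ⟨hnonneg, hlt⟩), zero_mul]

end adjointPotential

lemma J_le_lintegral_heatKernel_mul (hα : 0 < α) {f : EuclideanSpace ℝ (Fin n) → ℝ → ℝ}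
    (hf : Measurable (Function.uncurry f)) (q : EuclideanSpace ℝ (Fin n) × ℝ) :
    J n α f q.1 q.2 ≤ ∫⁻ w, heatKernel n α (q - w) * ENNReal.ofReal (f w.1 w.2) := by
  have hmeas : Measurable fun w => heatKernel n α (q - w) * ENNReal.ofReal (f w.1 w.2) :=
    (measurable_heatKernel.comp (measurable_const.sub measurable_id)).mul hf.ennreal_ofReal
  calc J n α f q.1 q.2
      ≤ ∫⁻ τ, ∫⁻ ξ, ENNReal.ofReal (Phi n α (q.1 - ξ) (q.2 - τ) * f ξ τ) :=
        setLIntegral_le_lintegral _ _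
    _ = ∫⁻ τ, ∫⁻ ξ, heatKernel n α (q - (ξ, τ)) * ENNReal.ofReal (f ξ τ) := by
        simp_rw [heatKernel, ENNReal.ofReal_mul (Phi_nonneg hα _ _)]
        rfl
    _ = _ := by rw [Measure.volume_eq_prod, lintegral_prod_symm' _ hmeas]

lemma setLIntegral_J_le (hα : 0 < α) {f : EuclideanSpace ℝ (Fin n) → ℝ → ℝ}
    (hf : Measurable (Function.uncurry f)) (K : Set (EuclideanSpace ℝ (Fin n) × ℝ)) :
    ∫⁻ q in K, J n α f q.1 q.2 ≤
      ∫⁻ w, adjointPotential n α K w * ENNReal.ofReal (f w.1 w.2) := by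
  calc _ ≤ ∫⁻ q in K, ∫⁻ w, heatKernel n α (q - w) * ENNReal.ofReal (f w.1 w.2) :=
        lintegral_mono fun q => J_le_lintegral_heatKernel_mul hα hf q
    _ = _ := by
        rw [lintegral_lintegral_swap ((measurable_heatKernel.comp
          (measurable_fst.sub measurable_snd)).mul
            (hf.ennreal_ofReal.comp measurable_snd)).aemeasurable]
        simp_rw [adjointPotential, lintegral_mul_const' _ _ ENNReal.ofReal_ne_top]

lemma ENNReal.le_rpow_add_one {p : ℝ} (hp : 1 ≤ p) (x : ℝ≥0∞) : x ≤ x ^ p + 1 := by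
  rcases le_total x 1 with hx | hx
  · exact hx.trans le_add_self
  · calc x = x ^ (1 : ℝ) := (ENNReal.rpow_one x).symm
      _ ≤ x ^ p := ENNReal.rpow_le_rpow_of_exponent_le hx hp
      _ ≤ x ^ p + 1 := le_self_add

lemma lintegral_mul_le_const_mul_lintegral_rpow_add {X : Type*} [MeasurableSpace X]
    {μ : Measure X} {g F : X → ℝ≥0∞} {C : ℝ≥0∞} {p : ℝ} (hp : 1 ≤ p) (hC : C ≠ ⊤)
    (hg : Measurable g) (hgC : ∀ᵐ x ∂μ, g x ≤ C) :
    ∫⁻ x, g x * F x ∂μ ≤ C * ∫⁻ x, F x ^ p ∂μ + ∫⁻ x, g x ∂μ := by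
  calc ∫⁻ x, g x * F x ∂μ ≤ ∫⁻ x, C * F x ^ p + g x ∂μ := lintegral_mono_ae <|
        hgC.mono fun x hx => calc
          g x * F x ≤ g x * (F x ^ p + 1) := by gcongr; exact ENNReal.le_rpow_add_one hp _
          _ = F x ^ p * g x + g x := by ring
          _ ≤ C * F x ^ p + g x := by rw [mul_comm C]; gcongr
    _ = _ := by rw [lintegral_add_right _ hg, lintegral_const_mul' _ _ hC]

lemma MemXp.setLIntegral_rpow_lt_top {p : ℝ} (hp : 0 < p) {f : EuclideanSpace ℝ (Fin n) → ℝ → ℝ}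
    (hf : MemXp n (ENNReal.ofReal p) f) (T : ℝ) :
    ∫⁻ w in {q : EuclideanSpace ℝ (Fin n) × ℝ | q.2 < T}, ENNReal.ofReal (f w.1 w.2) ^ p < ⊤ := by
  have h := hf.2 T
  rw [eLpNorm_eq_lintegral_rpow_enorm_toReal (by simpa using hp) ENNReal.ofReal_ne_top,
    ENNReal.toReal_ofReal hp.le, ENNReal.rpow_lt_top_iff_of_pos (by positivity)] at h
  exact (lintegral_mono fun w => ENNReal.rpow_le_rpow (Real.ofReal_le_enorm _) hp.le).trans_lt h

end

theorem J_locally_integrable_general (n : ℕ) (p α : ℝ)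
    (hp : 1 ≤ p) (hα : 0 < α)
    (f : EuclideanSpace ℝ (Fin n) → ℝ → ℝ)
    (hf : MemXp n (ENNReal.ofReal p) f)
    (hzero : ∀ᵐ q : EuclideanSpace ℝ (Fin n) × ℝ, q.2 < 0 → f q.1 q.2 = 0) :
    ∀ K : Set (EuclideanSpace ℝ (Fin n) × ℝ), IsCompact K →
      K ⊆ {q : EuclideanSpace ℝ (Fin n) × ℝ | 0 < q.2} →
      (∫⁻ q in K, J n α f q.1 q.2) < ⊤ := by
  intro K hK _
  obtain ⟨T, hKT⟩ : ∃ T, K ⊆ Prod.snd ⁻¹' Iic T :=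
    (hK.image continuous_snd).bddAbove.imp fun T hT q hq => hT (mem_image_of_mem _ hq)
  set A : Set (EuclideanSpace ℝ (Fin n) × ℝ) := Prod.snd ⁻¹' Ico 0 T
  have hA : MeasurableSet A := measurable_snd measurableSet_Ico
  have hC := setLIntegral_timeProfile_Ioc_lt_top hα T
  have hfA : ∫⁻ w in A, ENNReal.ofReal (f w.1 w.2) ^ p < ⊤ :=
    (lintegral_mono_set fun w (hw : w ∈ A) => hw.2).trans_lt
      (hf.setLIntegral_rpow_lt_top (by linarith) T)
  have hgA : ∫⁻ w in A, adjointPotential n α K w < ⊤ :=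
    ((lintegral_mono_set fun w (hw : w ∈ A) => hw.1).trans
      (setLIntegral_adjointPotential_le hα hKT)).trans_lt (ENNReal.mul_lt_top hC hK.measure_lt_top)
  calc ∫⁻ q in K, J n α f q.1 q.2
      ≤ ∫⁻ w, adjointPotential n α K w * ENNReal.ofReal (f w.1 w.2) := setLIntegral_J_le hα hf.1 K
    _ = ∫⁻ w in A, adjointPotential n α K w * ENNReal.ofReal (f w.1 w.2) := by
        rw [lintegral_congr_ae (adjointPotential_mul_ae_eq_indicator hK.measurableSet hKT hzero),
          lintegral_indicator hA]
    _ ≤ (∫⁻ s in Ioc 0 T, timeProfile α s) * (∫⁻ w in A, ENNReal.ofReal (f w.1 w.2) ^ p) +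
          ∫⁻ w in A, adjointPotential n α K w :=
        lintegral_mul_le_const_mul_lintegral_rpow_add hp hC.ne measurable_adjointPotential
          (ae_restrict_of_forall_mem hA fun w hw => adjointPotential_le hα hKT hw.1)
    _ < ⊤ := ENNReal.add_lt_top.2 ⟨ENNReal.mul_lt_top hC hfA, hgA⟩

theorem J_locally_integrable (n : ℕ) (hn : 1 ≤ n) (p α : ℝ)
    (hp : 1 ≤ p) (hα : 0 < α)
    (f : EuclideanSpace ℝ (Fin n) → ℝ → ℝ)
    (hf : MemXp n (ENNReal.ofReal p) f) (hpos : ∀ x t, 0 ≤ f x t)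
    (hzero : ∀ᵐ q : EuclideanSpace ℝ (Fin n) × ℝ, q.2 < 0 → f q.1 q.2 = 0) :
    ∀ K : Set (EuclideanSpace ℝ (Fin n) × ℝ), IsCompact K →
      K ⊆ {q : EuclideanSpace ℝ (Fin n) × ℝ | 0 < q.2} →
      (∫⁻ q in K, J n α f q.1 q.2) < ⊤ :=
  J_locally_integrable_general n p α hp hα f hf hzero
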